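/- arXiv:2010.15194 — 6 statements merged into one kernel-verified Lean document; each statement's English description precedes it below -/
import Mathlib

section
/- Let ρ be an atomless, locally finite non-negative measure on [0, ∞) and a, b ∈ ℝ. Then the integral equation u(t) = a + b ∫_{[0,t]} u(s) dρ(s) for t ≥ 0 has the unique continuous solution u(t) = a · exp(b · ρ([0, t])). -/
/-!
Write `F t = ρ [0, t]`. As `ρ` has no atoms, `F` is continuous and nondecreasing, and it pushes
`ρ` restricted to `[0, t]` forward to Lebesgue measure on `[0, F t]`. So
`∫_{[0,t]} g (F s) dρ(s) = ∫_0^{F t} g` for continuous `g`, which turns the equation into an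
ordinary one: `a exp (b F)` solves it, and `∫_{[0,t]} F^n dρ = F(t)^(n+1) / (n+1)`. Iterating the
homogeneous equation bounds the difference `w` of two solutions by
`sup |w| * (|b| F t)^n / n!`, which tends to `0`.
-/

open MeasureTheory Set Filter Topology

theorem setIntegral_Icc_zero_pow (n : ℕ) {c : ℝ} (hc : 0 ≤ c) :
    ∫ x in Icc 0 c, x ^ n = c ^ (n + 1) / (n + 1) := by
  rw [integral_Icc_eq_integral_Ioc, ← intervalIntegral.integral_of_le hc, integral_pow]
  simp

theorem mul_setIntegral_Icc_zero_exp_mul (b : ℝ) {c : ℝ} (hc : 0 ≤ c) :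
    b * ∫ x in Icc 0 c, Real.exp (b * x) = Real.exp (b * c) - 1 := by
  rw [integral_Icc_eq_integral_Ioc, ← intervalIntegral.integral_of_le hc,
    ← intervalIntegral.integral_const_mul, intervalIntegral.integral_eq_sub_of_hasDerivAt
      (f := fun x => Real.exp (b * x)) (fun x _ => ?_)
      ((by fun_prop : Continuous fun x => b * Real.exp (b * x)).intervalIntegrable _ _)]
  · simp
  · simpa [mul_comm] using ((hasDerivAt_id x).const_mul b).exp

noncomputable def cumulativeMass (ρ : Measure ℝ) (t : ℝ) : ℝ := (ρ (Icc 0 t)).toReal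

theorem cumulativeMass_nonneg {ρ : Measure ℝ} {t : ℝ} : 0 ≤ cumulativeMass ρ t :=
  ENNReal.toReal_nonneg

theorem cumulativeMass_zero {ρ : Measure ℝ} [NullSingletonClass ρ] :
    cumulativeMass ρ 0 = 0 := by
  simp [cumulativeMass]

section

variable {ρ : Measure ℝ} [IsFiniteMeasureOnCompacts ρ]

theorem ofReal_cumulativeMass (t : ℝ) :
    ENNReal.ofReal (cumulativeMass ρ t) = ρ (Icc 0 t) :=
  ENNReal.ofReal_toReal isCompact_Icc.measure_ne_top

theorem monotone_cumulativeMass : Monotone (cumulativeMass ρ) := fun _ _ hxy =>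
  ENNReal.toReal_mono isCompact_Icc.measure_ne_top (measure_mono (Icc_subset_Icc_right hxy))

theorem cumulativeMass_sub_le (x y : ℝ) :
    cumulativeMass ρ y - cumulativeMass ρ x ≤ (ρ (Icc x y)).toReal := by
  have hsub : Icc 0 y ⊆ Icc 0 x ∪ Icc x y := fun z hz => by
    rcases le_total z x with h | h
    · exact Or.inl ⟨hz.1, h⟩
    · exact Or.inr ⟨h, hz.2⟩
  rw [sub_le_iff_le_add', cumulativeMass, cumulativeMass,
    ← ENNReal.toReal_add isCompact_Icc.measure_ne_top isCompact_Icc.measure_ne_top]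
  exact ENNReal.toReal_mono
    (ENNReal.add_ne_top.2 ⟨isCompact_Icc.measure_ne_top, isCompact_Icc.measure_ne_top⟩)
    ((measure_mono hsub).trans (measure_union_le _ _))

theorem abs_cumulativeMass_sub_le (s t : ℝ) :
    |cumulativeMass ρ s - cumulativeMass ρ t| ≤ (ρ (uIcc s t)).toReal := by
  rcases le_total s t with h | h
  · rw [abs_sub_comm, abs_of_nonneg (sub_nonneg.2 (monotone_cumulativeMass h)), uIcc_of_le h]
    exact cumulativeMass_sub_le _ _
  · rw [abs_of_nonneg (sub_nonneg.2 (monotone_cumulativeMass h)), uIcc_of_ge h]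
    exact cumulativeMass_sub_le _ _

theorem continuous_cumulativeMass [NullSingletonClass ρ] : Continuous (cumulativeMass ρ) := by
  refine continuous_iff_continuousAt.2 fun t => tendsto_iff_norm_sub_tendsto_zero.2 ?_
  have hsub : ∀ s, uIcc s t ⊆ Metric.closedBall t (dist s t) := fun s =>
    (convex_closedBall t _).ordConnected.uIcc_subset (Metric.mem_closedBall.2 le_rfl)
      (Metric.mem_closedBall_self dist_nonneg)
  have hdist : Tendsto (fun s => dist s t) (𝓝 t) (𝓝 0) :=
    (continuous_id.dist continuous_const).tendsto' t 0 (dist_self t)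
  have hball :
      Tendsto (fun s => (ρ (Metric.closedBall t (dist s t))).toReal) (𝓝 t) (𝓝 0) := by
    have := (tendsto_measure_cthickening_of_isCompact (μ := ρ)
      (isCompact_singleton (x := t))).comp hdist
    rw [measure_singleton] at this
    simpa [Function.comp_def, Metric.cthickening_singleton _ dist_nonneg] using
      (ENNReal.tendsto_toReal ENNReal.zero_ne_top).comp this
  refine squeeze_zero (fun _ => norm_nonneg _) (fun s => ?_) hball
  exact (abs_cumulativeMass_sub_le s t).trans
    (ENNReal.toReal_mono (isCompact_closedBall _ _).measure_ne_top (measure_mono (hsub s)))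

end

theorem Monotone.exists_preimage_Iic_inter_Icc_eq {F : ℝ → ℝ} (hmono : Monotone F)
    (hcont : Continuous F) {a t y : ℝ} (hat : a ≤ t) (hy : y ∈ Icc (F a) (F t)) :
    ∃ τ, F τ = y ∧ F ⁻¹' Iic y ∩ Icc a t = Icc a τ := by
  set S := F ⁻¹' Iic y ∩ Icc a t
  have hS : IsCompact S := isCompact_Icc.inter_left (isClosed_Iic.preimage hcont)
  obtain ⟨τ, hτS, hτmax⟩ := hS.exists_isGreatest ⟨a, hy.1, le_rfl, hat⟩
  obtain ⟨σ, hσ, hσy⟩ := intermediate_value_Icc hat hcont.continuousOn hy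
  refine ⟨τ, le_antisymm hτS.1 (hσy ▸ hmono (hτmax ⟨hσy.le, hσ⟩)), ?_⟩
  exact Subset.antisymm (fun r hr => ⟨hr.2.1, hτmax hr⟩)
    fun r hr => ⟨(hmono hr.2).trans hτS.1, hr.1, hr.2.trans hτS.2.2⟩

section

variable {ρ : Measure ℝ} [IsFiniteMeasureOnCompacts ρ] [NullSingletonClass ρ]

theorem map_cumulativeMass_restrict_Icc {t : ℝ} (ht : 0 ≤ t) :
    (ρ.restrict (Icc 0 t)).map (cumulativeMass ρ) =
      volume.restrict (Icc 0 (cumulativeMass ρ t)) := by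
  have hF : Measurable (cumulativeMass ρ) := monotone_cumulativeMass.measurable
  have : IsFiniteMeasure (ρ.restrict (Icc 0 t)) :=
    isFiniteMeasure_restrict.2 isCompact_Icc.measure_ne_top
  refine Measure.ext_of_Iic _ _ fun y => ?_
  rw [Measure.map_apply hF measurableSet_Iic, Measure.restrict_apply (hF measurableSet_Iic),
    Measure.restrict_apply measurableSet_Iic]
  rcases lt_or_ge y 0 with hy | hy
  · have h1 : cumulativeMass ρ ⁻¹' Iic y ∩ Icc 0 t = ∅ :=
      eq_empty_of_forall_notMem fun r hr => (hr.1.trans_lt hy).not_ge cumulativeMass_nonneg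
    have h2 : Iic y ∩ Icc 0 (cumulativeMass ρ t) = ∅ :=
      eq_empty_of_forall_notMem fun x hx => (hx.1.trans_lt hy).not_ge hx.2.1
    rw [h1, h2, measure_empty, measure_empty]
  rcases le_or_gt (cumulativeMass ρ t) y with hty | hyt
  · have h1 : Icc 0 t ⊆ cumulativeMass ρ ⁻¹' Iic y := fun r hr =>
      (monotone_cumulativeMass hr.2).trans hty
    have h2 : Icc 0 (cumulativeMass ρ t) ⊆ Iic y := fun x hx => hx.2.trans hty
    rw [inter_eq_right.2 h1, inter_eq_right.2 h2, Real.volume_Icc, sub_zero,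
      ofReal_cumulativeMass]
  · obtain ⟨τ, hτ, hS⟩ := monotone_cumulativeMass.exists_preimage_Iic_inter_Icc_eq
      continuous_cumulativeMass ht (y := y) ⟨by rwa [cumulativeMass_zero], hyt.le⟩
    have h2 : Iic y ∩ Icc 0 (cumulativeMass ρ t) = Icc 0 y := by
      ext x
      simp only [mem_inter_iff, mem_Iic, mem_Icc]
      constructor
      · rintro ⟨hxy, hx0, -⟩
        exact ⟨hx0, hxy⟩
      · rintro ⟨hx0, hxy⟩
        exact ⟨hxy, hx0, hxy.trans hyt.le⟩
    rw [hS, ← ofReal_cumulativeMass, hτ, h2, Real.volume_Icc, sub_zero]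

theorem setIntegral_comp_cumulativeMass {E : Type*} [NormedAddCommGroup E] [NormedSpace ℝ E]
    {g : ℝ → E} (hg : Continuous g) {t : ℝ} (ht : 0 ≤ t) :
    ∫ s in Icc 0 t, g (cumulativeMass ρ s) ∂ρ = ∫ x in Icc 0 (cumulativeMass ρ t), g x := by
  rw [← map_cumulativeMass_restrict_Icc ht, integral_map
    monotone_cumulativeMass.measurable.aemeasurable hg.aestronglyMeasurable]

theorem setIntegral_pow_cumulativeMass (n : ℕ) {t : ℝ} (ht : 0 ≤ t) :
    ∫ s in Icc 0 t, cumulativeMass ρ s ^ n ∂ρ = cumulativeMass ρ t ^ (n + 1) / (n + 1) := by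
  rw [setIntegral_comp_cumulativeMass (continuous_pow n) ht,
    setIntegral_Icc_zero_pow n cumulativeMass_nonneg]

theorem mul_setIntegral_exp_mul_cumulativeMass (b : ℝ) {t : ℝ} (ht : 0 ≤ t) :
    b * ∫ s in Icc 0 t, Real.exp (b * cumulativeMass ρ s) ∂ρ =
      Real.exp (b * cumulativeMass ρ t) - 1 := by
  rw [setIntegral_comp_cumulativeMass (g := fun x => Real.exp (b * x)) (by fun_prop) ht,
    mul_setIntegral_Icc_zero_exp_mul b cumulativeMass_nonneg]

theorem eq_add_mul_setIntegral_exp_mul_cumulativeMass (a b : ℝ) {t : ℝ} (ht : 0 ≤ t) :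
    a * Real.exp (b * cumulativeMass ρ t) =
      a + b * ∫ s in Icc 0 t, a * Real.exp (b * cumulativeMass ρ s) ∂ρ := by
  rw [integral_const_mul, mul_left_comm, mul_setIntegral_exp_mul_cumulativeMass b ht]
  ring

theorem abs_le_pow_div_factorial_of_eq_mul_setIntegral {w : ℝ → ℝ} {b M T : ℝ}
    (hw : ContinuousOn w (Icc 0 T))
    (heq : ∀ s ∈ Icc 0 T, w s = b * ∫ r in Icc 0 s, w r ∂ρ)
    (hM : ∀ s ∈ Icc 0 T, |w s| ≤ M) (n : ℕ) :
    ∀ s ∈ Icc 0 T, |w s| ≤ M * (|b| * cumulativeMass ρ s) ^ n / n.factorial := by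
  induction n with
  | zero => simpa using hM
  | succ n ih =>
    intro s hs
    have hsub : Icc 0 s ⊆ Icc 0 T := Icc_subset_Icc_right hs.2
    set c := M * |b| ^ n / n.factorial
    have hbound : ∀ r ∈ Icc 0 s, |w r| ≤ c * cumulativeMass ρ r ^ n := fun r hr =>
      (ih r (hsub hr)).trans_eq (by rw [mul_pow]; ring)
    calc |w s| = |b| * |∫ r in Icc 0 s, w r ∂ρ| := by rw [heq s hs, abs_mul]
      _ ≤ |b| * ∫ r in Icc 0 s, c * cumulativeMass ρ r ^ n ∂ρ := by
        gcongr
        exact abs_integral_le_integral_abs.trans (setIntegral_mono_on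
          ((hw.mono hsub).integrableOn_Icc).abs
          (continuous_const.mul (continuous_cumulativeMass.pow n)).integrableOn_Icc
          measurableSet_Icc hbound)
      _ = M * (|b| * cumulativeMass ρ s) ^ (n + 1) / (n + 1).factorial := by
        rw [integral_const_mul, setIntegral_pow_cumulativeMass n hs.1, Nat.factorial_succ,
          Nat.cast_mul]
        simp only [c]
        push_cast
        field_simp
        ring

theorem eq_zero_of_eq_mul_setIntegral {w : ℝ → ℝ} {b : ℝ} (hw : ContinuousOn w (Ici 0))
    (heq : ∀ t, 0 ≤ t → w t = b * ∫ s in Icc 0 t, w s ∂ρ) {t : ℝ} (ht : 0 ≤ t) :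
    w t = 0 := by
  obtain ⟨M, hM⟩ := isCompact_Icc.exists_bound_of_continuousOn (hw.mono Icc_subset_Ici_self)
  have hbound := fun n => abs_le_pow_div_factorial_of_eq_mul_setIntegral
    (hw.mono Icc_subset_Ici_self) (fun s hs => heq s hs.1) hM n t ⟨ht, le_rfl⟩
  have hlim : Tendsto (fun n : ℕ => M * (|b| * cumulativeMass ρ t) ^ n / n.factorial)
      atTop (𝓝 0) := by
    simpa [mul_div_assoc] using
      (FloorSemiring.tendsto_pow_div_factorial_atTop (|b| * cumulativeMass ρ t)).const_mul M
  exact abs_nonpos_iff.1 (ge_of_tendsto' hlim hbound)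

end

theorem stmt_6 (ρ : Measure ℝ)
    (hfin : ∀ B : Set ℝ, Bornology.IsBounded B → ρ B < ⊤)
    (hatom : ∀ t : ℝ, ρ {t} = 0) (a b : ℝ) :
    ∃ u : ℝ → ℝ, ContinuousOn u (Set.Ici 0) ∧
      (∀ t : ℝ, 0 ≤ t → u t = a + b * ∫ s in Set.Icc 0 t, u s ∂ρ) ∧
      (∀ t : ℝ, 0 ≤ t → u t = a * Real.exp (b * (ρ (Set.Icc 0 t)).toReal)) ∧
      (∀ v : ℝ → ℝ, ContinuousOn v (Set.Ici 0) →
        (∀ t : ℝ, 0 ≤ t → v t = a + b * ∫ s in Set.Icc 0 t, v s ∂ρ) →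
        ∀ t : ℝ, 0 ≤ t → v t = u t) := by
  have : IsFiniteMeasureOnCompacts ρ := ⟨fun K hK => hfin K hK.isBounded⟩
  have : NullSingletonClass ρ := ⟨hatom⟩
  set u : ℝ → ℝ := fun t => a * Real.exp (b * cumulativeMass ρ t)
  have hu : ContinuousOn u (Ici 0) :=
    (continuous_const.mul (continuous_cumulativeMass.const_mul b).rexp).continuousOn
  have hsol : ∀ t, 0 ≤ t → u t = a + b * ∫ s in Icc 0 t, u s ∂ρ :=
    fun t ht => eq_add_mul_setIntegral_exp_mul_cumulativeMass a b ht
  refine ⟨u, hu, hsol, fun t _ => rfl, fun v hv hveq t ht => ?_⟩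
  have hint : ∀ f : ℝ → ℝ, ContinuousOn f (Ici 0) → ∀ s, IntegrableOn f (Icc 0 s) ρ :=
    fun f hf s => (hf.mono Icc_subset_Ici_self).integrableOn_Icc
  have hdiff : ∀ s, 0 ≤ s → (v - u) s = b * ∫ r in Icc 0 s, (v - u) r ∂ρ := by
    intro s hs
    rw [Pi.sub_apply, hveq s hs, hsol s hs, integral_sub' (hint v hv s) (hint u hu s)]
    ring
  exact sub_eq_zero.1 (eq_zero_of_eq_mul_setIntegral (hv.sub hu) hdiff ht)
end

section
/- For every ξ in the unit circle 𝕋 ⊂ ℂ and every n ∈ ℕ, one has |(ξ^n − 1 − i·n·Im(ξ)) / (1 − Re(ξ))| ≤ n^3, where the value at ξ = 1 is defined by continuous extension as −n^2. -/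
/-!
Since `i · Im ξ = ξ - Re ξ`, the numerator equals `(ξⁿ - 1 - n(ξ - 1)) - n(1 - Re ξ)`. Writing
`ξⁿ - 1 - n(ξ - 1) = (ξ - 1) ∑_{j<n} (ξʲ - 1)` and using `‖ξʲ - 1‖ ≤ j‖ξ - 1‖` gives
`‖ξⁿ - 1 - n(ξ - 1)‖ ≤ C(n,2) ‖ξ - 1‖²`, and on the unit circle `‖ξ - 1‖² = 2(1 - Re ξ)`.
Hence the quotient has norm at most `2·C(n,2) + n = n² ≤ n³`, as does the value `-n²` at `ξ = 1`.
-/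

section NormedRing

variable {R : Type*} [SeminormedRing R] {x : R}

lemma norm_pow_sub_one_le_mul (hx : ‖x‖ ≤ 1) (k : ℕ) : ‖x ^ k - 1‖ ≤ k * ‖x - 1‖ := by
  induction k with
  | zero => simp
  | succ k ih =>
    calc ‖x ^ (k + 1) - 1‖ = ‖x * (x ^ k - 1) + (x - 1)‖ := by rw [pow_succ']; noncomm_ring
      _ ≤ ‖x‖ * ‖x ^ k - 1‖ + ‖x - 1‖ := (norm_add_le _ _).trans (by gcongr; exact norm_mul_le _ _)
      _ ≤ 1 * (k * ‖x - 1‖) + ‖x - 1‖ := by gcongr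
      _ = (k + 1 : ℕ) * ‖x - 1‖ := by push_cast; ring

lemma norm_pow_sub_one_sub_natCast_mul_le (hx : ‖x‖ ≤ 1) (n : ℕ) :
    ‖x ^ n - 1 - n * (x - 1)‖ ≤ n.choose 2 * ‖x - 1‖ ^ 2 := by
  induction n with
  | zero => simp
  | succ n ih =>
    calc ‖x ^ (n + 1) - 1 - (n + 1 : ℕ) * (x - 1)‖
        = ‖(x ^ n - 1 - n * (x - 1)) + (x ^ n - 1) * (x - 1)‖ := by
          push_cast; rw [pow_succ]; noncomm_ring
      _ ≤ n.choose 2 * ‖x - 1‖ ^ 2 + n * ‖x - 1‖ * ‖x - 1‖ :=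
          (norm_add_le _ _).trans (add_le_add ih
            ((norm_mul_le _ _).trans (by gcongr; exact norm_pow_sub_one_le_mul hx n)))
      _ = (n + 1).choose 2 * ‖x - 1‖ ^ 2 := by
          rw [Nat.choose_succ_succ, Nat.choose_one_right]; push_cast; ring

end NormedRing

lemma two_mul_choose_two_add_self (n : ℕ) : 2 * (n.choose 2 : ℝ) + n = n ^ 2 := by
  rw [Nat.cast_choose_two]; ring

lemma Complex.norm_pow_sub_one_sub_I_mul_im_div_le {ξ : ℂ} (hξ : ‖ξ‖ = 1) (hξ1 : ξ ≠ 1) (n : ℕ) :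
    ‖(ξ ^ n - 1 - I * n * ξ.im) / (1 - (ξ.re : ℂ))‖ ≤ (n : ℝ) ^ 2 := by
  have hdist := norm_sub_one_sq_eq_of_norm_eq_one hξ
  have hpos : 0 < 1 - ξ.re := by
    have : 0 < ‖ξ - 1‖ ^ 2 := pow_pos (norm_pos_iff.mpr (sub_ne_zero.mpr hξ1)) 2
    linarith
  have hden : (1 - (ξ.re : ℂ)) = ((1 - ξ.re : ℝ) : ℂ) := by push_cast; ring
  have hnum : ξ ^ n - 1 - I * n * ξ.im = (ξ ^ n - 1 - n * (ξ - 1)) - n * (1 - (ξ.re : ℂ)) := by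
    linear_combination -(n : ℂ) * re_add_im ξ
  rw [hnum, sub_div, mul_div_cancel_right₀ _ (by rw [hden]; exact_mod_cast hpos.ne'), hden]
  calc ‖(ξ ^ n - 1 - n * (ξ - 1)) / ((1 - ξ.re : ℝ) : ℂ) - n‖
      ≤ ‖ξ ^ n - 1 - n * (ξ - 1)‖ / (1 - ξ.re) + n := by
        refine (norm_sub_le _ _).trans ?_
        rw [norm_div, norm_real, Real.norm_of_nonneg hpos.le, norm_natCast]
    _ ≤ n.choose 2 * ‖ξ - 1‖ ^ 2 / (1 - ξ.re) + n := by
        gcongr; exact norm_pow_sub_one_sub_natCast_mul_le hξ.le n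
    _ = (n : ℝ) ^ 2 := by
        rw [hdist, ← two_mul_choose_two_add_self n]; field_simp

theorem stmt_8 (n : ℕ) (ξ : ℂ) (hξ : ‖ξ‖ = 1) :
    ‖(if ξ = 1 then (-(n ^ 2 : ℂ))
      else (ξ ^ n - 1 - Complex.I * n * ξ.im) / (1 - (ξ.re : ℂ)))‖ ≤ (n : ℝ) ^ 3 := by
  have hsq_le_cube : (n : ℝ) ^ 2 ≤ (n : ℝ) ^ 3 := by
    rcases n.eq_zero_or_pos with rfl | hn
    · simp
    · exact pow_le_pow_right₀ (by exact_mod_cast hn) (by norm_num)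
  refine le_trans ?_ hsq_le_cube
  split_ifs with hξ1
  · simp
  · exact Complex.norm_pow_sub_one_sub_I_mul_im_div_le hξ hξ1 n
end

section
/- Let f, g : 𝔻 → 𝔻 be holomorphic self-maps of the unit disk with f(0) = g(0) = 0, and suppose g = f ∘ h for some holomorphic h : 𝔻 → 𝔻 with h(0) = 0 (i.e., g is subordinate to f through a zero-fixing map). Write α = Re[(f'(0) − g'(0))/(f'(0) + g'(0))] and β = Im[(f'(0) − g'(0))/(f'(0) + g'(0))]. Then α ≥ 0 and |z − h(z)| ≤ 2|z|·(α·(1+|z|)/(1−|z|) + |β|) for all z ∈ 𝔻. -/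
/-!
Write `h z = z * w z` with `w = dslope h 0`; by the Schwarz lemma `‖w‖ ≤ 1` on the disk, and
the quotient in the statement is the Cayley transform `(1 - w 0) / (1 + w 0)`. By the maximum
modulus principle either `w` is a unimodular constant, or `‖w‖ < 1` and `Q = (1 - w) / (1 + w)`
has positive real part. In the latter case the Schwarz lemma applied to the Möbius map
`(p - α) / (p + α)`, `p = Q - i β`, gives the Harnack-type bound
`‖Q z‖ ≤ α (1 + ‖z‖) / (1 - ‖z‖) + |β|`, and `1 - w = Q (1 + w)` with `‖1 + w‖ ≤ 2` finishes.
-/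

open Metric Set Complex

noncomputable def cayley (u : ℂ) : ℂ := (1 - u) / (1 + u)

lemma cayley_re (u : ℂ) : (cayley u).re = (1 - ‖u‖ ^ 2) / ‖1 + u‖ ^ 2 := by
  simp only [cayley, div_re, Complex.sq_norm, normSq_apply, sub_re, sub_im, add_re, add_im,
    one_re, one_im]
  ring

lemma cayley_re_nonneg {u : ℂ} (hu : ‖u‖ ≤ 1) : 0 ≤ (cayley u).re := by
  rw [cayley_re]
  have : ‖u‖ ^ 2 ≤ 1 := pow_le_one₀ (norm_nonneg u) hu
  positivity

lemma one_add_ne_zero_of_norm_lt_one {u : ℂ} (hu : ‖u‖ < 1) : 1 + u ≠ 0 := by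
  intro h
  rw [add_eq_zero_iff_eq_neg'.mp h, norm_neg, norm_one] at hu
  exact lt_irrefl 1 hu

lemma cayley_re_pos {u : ℂ} (hu : ‖u‖ < 1) : 0 < (cayley u).re := by
  rw [cayley_re]
  have h1 : ‖u‖ ^ 2 < 1 := pow_lt_one₀ (norm_nonneg u) hu two_ne_zero
  have h2 : 0 < ‖1 + u‖ := norm_pos_iff.mpr (one_add_ne_zero_of_norm_lt_one hu)
  have : 0 < 1 - ‖u‖ ^ 2 := by linarith
  positivity

lemma norm_one_sub_le_two_mul_norm_cayley {u : ℂ} (hu : ‖u‖ ≤ 1) (hu' : 1 + u ≠ 0) :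
    ‖1 - u‖ ≤ 2 * ‖cayley u‖ := by
  have h2 : ‖1 + u‖ ≤ 2 := (norm_add_le 1 u).trans (by rw [norm_one]; linarith)
  calc ‖1 - u‖ = ‖cayley u‖ * ‖1 + u‖ := by rw [cayley, ← norm_mul, div_mul_cancel₀ _ hu']
    _ ≤ ‖cayley u‖ * 2 := by gcongr
    _ = 2 * ‖cayley u‖ := mul_comm _ _

lemma norm_sub_ofReal_lt_norm_add_ofReal_iff (u : ℂ) {t : ℝ} (ht : 0 < t) :
    ‖u - t‖ < ‖u + t‖ ↔ 0 < u.re := by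
  have key : ‖u + t‖ ^ 2 - ‖u - t‖ ^ 2 = 4 * t * u.re := by
    simp only [Complex.sq_norm, normSq_apply, add_re, add_im, sub_re, sub_im, ofReal_re, ofReal_im]
    ring
  rw [← sq_lt_sq₀ (norm_nonneg _) (norm_nonneg _)]
  constructor <;> intro h <;> nlinarith

lemma norm_le_of_norm_sub_ofReal_le {u : ℂ} {t r : ℝ} (ht : 0 ≤ t) (hr₀ : 0 ≤ r) (hr₁ : r < 1)
    (h : ‖u - t‖ ≤ r * ‖u + t‖) : ‖u‖ ≤ t * (1 + r) / (1 - r) := by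
  have hsub : ‖u‖ - t ≤ ‖u - t‖ := by
    simpa [Complex.norm_real, abs_of_nonneg ht] using norm_sub_norm_le u t
  have hadd : ‖u + t‖ ≤ ‖u‖ + t := by
    simpa [Complex.norm_real, abs_of_nonneg ht] using norm_add_le u t
  rw [le_div_iff₀ (by linarith)]
  nlinarith

lemma norm_apply_le_of_re_pos_of_im_zero {p : ℂ → ℂ} (hp : DifferentiableOn ℂ p (ball 0 1))
    (hre : ∀ z ∈ ball (0 : ℂ) 1, 0 < (p z).re) (hp0 : (p 0).im = 0) {z : ℂ}
    (hz : z ∈ ball (0 : ℂ) 1) :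
    ‖p z‖ ≤ (p 0).re * (1 + ‖z‖) / (1 - ‖z‖) := by
  set t := (p 0).re
  have ht : 0 < t := hre 0 (mem_ball_self one_pos)
  have hden : ∀ z ∈ ball (0 : ℂ) 1, p z + t ≠ 0 := fun z hz h => by
    have := congrArg re h
    simp only [add_re, ofReal_re, zero_re] at this
    linarith [hre z hz]
  set r : ℂ → ℂ := fun z => (p z - t) / (p z + t)
  have hr : DifferentiableOn ℂ r (ball 0 1) :=
    (hp.sub_const _).div (hp.add_const _) hden
  have hr_maps : MapsTo r (ball 0 1) (closedBall 0 1) := fun z hz => by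
    rw [mem_closedBall_zero_iff, norm_div, div_le_one (norm_pos_iff.mpr (hden z hz))]
    exact ((norm_sub_ofReal_lt_norm_add_ofReal_iff (p z) ht).mpr (hre z hz)).le
  have hr0 : r 0 = 0 := by
    simp only [r, div_eq_zero_iff, sub_eq_zero]
    exact Or.inl (Complex.ext rfl (by simp [hp0]))
  have hz' : ‖z‖ < 1 := mem_ball_zero_iff.mp hz
  have schwarz : ‖r z‖ ≤ ‖z‖ := norm_le_norm_of_mapsTo_ball hr hr_maps hr0 hz'
  rw [norm_div, div_le_iff₀ (norm_pos_iff.mpr (hden z hz))] at schwarz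
  exact norm_le_of_norm_sub_ofReal_le ht.le (norm_nonneg z) hz' schwarz

lemma norm_apply_le_of_re_pos {p : ℂ → ℂ} (hp : DifferentiableOn ℂ p (ball 0 1))
    (hre : ∀ z ∈ ball (0 : ℂ) 1, 0 < (p z).re) {z : ℂ} (hz : z ∈ ball (0 : ℂ) 1) :
    ‖p z‖ ≤ (p 0).re * (1 + ‖z‖) / (1 - ‖z‖) + |(p 0).im| := by
  set β := (p 0).im
  have hβ := norm_apply_le_of_re_pos_of_im_zero (p := fun z => p z - β * I)
    (hp.sub_const _) (fun z hz => by simpa using hre z hz) (by simp [β]) hz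
  simp only [sub_re, mul_re, ofReal_re, I_re, ofReal_im, I_im] at hβ
  calc ‖p z‖ = ‖(p z - β * I) + β * I‖ := by rw [sub_add_cancel]
    _ ≤ ‖p z - β * I‖ + |β| := by simpa using norm_add_le (p z - β * I) (β * I)
    _ ≤ (p 0).re * (1 + ‖z‖) / (1 - ‖z‖) + |β| := by simpa using add_le_add_right hβ |β|

lemma eq_apply_zero_or_mapsTo_ball {w : ℂ → ℂ} (hw : DifferentiableOn ℂ w (ball 0 1))
    (hw_maps : MapsTo w (ball 0 1) (closedBall 0 1)) :
    (∀ z ∈ ball (0 : ℂ) 1, w z = w 0) ∨ MapsTo w (ball 0 1) (ball 0 1) := by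
  by_cases hlt : MapsTo w (ball 0 1) (ball 0 1)
  · exact Or.inr hlt
  left
  obtain ⟨c, hc, hwc⟩ : ∃ c ∈ ball (0 : ℂ) 1, ‖w c‖ = 1 := by
    simp only [MapsTo, not_forall] at hlt
    obtain ⟨c, hc, hwc⟩ := hlt
    refine ⟨c, hc, le_antisymm (mem_closedBall_zero_iff.mp (hw_maps hc)) ?_⟩
    simpa using hwc
  have hmax : IsMaxOn (norm ∘ w) (ball 0 1) c := fun x hx => by
    simpa [hwc] using hw_maps hx
  have hconst := eqOn_of_isPreconnected_of_isMaxOn_norm (convex_ball (0 : ℂ) 1).isPreconnected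
    isOpen_ball hw hc hmax
  exact fun z hz => (hconst hz).trans (hconst (mem_ball_self one_pos)).symm

lemma norm_one_sub_apply_le {w : ℂ → ℂ} (hw : DifferentiableOn ℂ w (ball 0 1))
    (hw_maps : MapsTo w (ball 0 1) (closedBall 0 1)) (hw0 : 1 + w 0 ≠ 0) {z : ℂ}
    (hz : z ∈ ball (0 : ℂ) 1) :
    ‖1 - w z‖ ≤ 2 * ((cayley (w 0)).re * (1 + ‖z‖) / (1 - ‖z‖) + |(cayley (w 0)).im|) := by
  have hwz : ‖w z‖ ≤ 1 := mem_closedBall_zero_iff.mp (hw_maps hz)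
  rcases eq_apply_zero_or_mapsTo_ball hw hw_maps with hconst | hball
  · have hz' : ‖z‖ < 1 := mem_ball_zero_iff.mp hz
    have hw0_le : ‖w 0‖ ≤ 1 := hconst z hz ▸ hwz
    have hα := cayley_re_nonneg hw0_le
    have hfactor : 1 ≤ (1 + ‖z‖) / (1 - ‖z‖) := by
      rw [le_div_iff₀ (by linarith)]
      linarith [norm_nonneg z]
    rw [hconst z hz]
    refine (norm_one_sub_le_two_mul_norm_cayley hw0_le hw0).trans ?_
    gcongr
    calc ‖cayley (w 0)‖ ≤ |(cayley (w 0)).re| + |(cayley (w 0)).im| := norm_le_abs_re_add_abs_im _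
      _ ≤ (cayley (w 0)).re * (1 + ‖z‖) / (1 - ‖z‖) + |(cayley (w 0)).im| := by
        rw [abs_of_nonneg hα, mul_div_assoc]
        gcongr
        exact le_mul_of_one_le_right hα hfactor
  · have hlt : ∀ z ∈ ball (0 : ℂ) 1, ‖w z‖ < 1 := fun z hz => mem_ball_zero_iff.mp (hball hz)
    have hQ : DifferentiableOn ℂ (cayley ∘ w) (ball 0 1) :=
      ((hw.const_sub 1).div (hw.const_add 1) fun z hz =>
        one_add_ne_zero_of_norm_lt_one (hlt z hz))
    refine (norm_one_sub_le_two_mul_norm_cayley hwz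
      (one_add_ne_zero_of_norm_lt_one (hlt z hz))).trans ?_
    gcongr
    exact norm_apply_le_of_re_pos (p := cayley ∘ w) hQ (fun z hz => cayley_re_pos (hlt z hz)) hz

theorem stmt_11_general (f g h : ℂ → ℂ)
    (hf : DifferentiableOn ℂ f (Metric.ball 0 1))
    (hh : DifferentiableOn ℂ h (Metric.ball 0 1))
    (hhm : Set.MapsTo h (Metric.ball 0 1) (Metric.ball 0 1))
    (hh0 : h 0 = 0)
    (hsub : ∀ z ∈ Metric.ball (0 : ℂ) 1, g z = f (h z))
    (hne : deriv f 0 + deriv g 0 ≠ 0) :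
    0 ≤ ((deriv f 0 - deriv g 0) / (deriv f 0 + deriv g 0)).re ∧
    ∀ z ∈ Metric.ball (0 : ℂ) 1,
      ‖z - h z‖ ≤ 2 * ‖z‖ *
        (((deriv f 0 - deriv g 0) / (deriv f 0 + deriv g 0)).re *
            (1 + ‖z‖) / (1 - ‖z‖)
          + |((deriv f 0 - deriv g 0) / (deriv f 0 + deriv g 0)).im|) := by
  have hball : ball (0 : ℂ) 1 ∈ nhds 0 := ball_mem_nhds 0 one_pos
  set w := dslope h 0
  have hw : DifferentiableOn ℂ w (ball 0 1) := (differentiableOn_dslope hball).mpr hh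
  have hw_maps : MapsTo w (ball 0 1) (closedBall 0 1) := fun z hz => by
    simpa using norm_dslope_le_div_of_mapsTo_ball hh (by rw [hh0]; exact hhm.mono_right ball_subset_closedBall) hz
  have hgf : deriv g 0 = deriv f 0 * w 0 := by
    rw [Filter.EventuallyEq.deriv_eq (f := f ∘ h) (Filter.eventually_of_mem hball hsub),
      deriv_comp 0 (by rw [hh0]; exact hf.differentiableAt hball) (hh.differentiableAt hball),
      hh0]
    exact congrArg _ (dslope_same h 0).symm
  rw [hgf, ← mul_one_add] at hne
  have hq : (deriv f 0 - deriv g 0) / (deriv f 0 + deriv g 0) = cayley (w 0) := by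
    rw [hgf, ← mul_one_sub, ← mul_one_add, mul_div_mul_left _ _ (left_ne_zero_of_mul hne), cayley]
  rw [hq]
  refine ⟨cayley_re_nonneg (mem_closedBall_zero_iff.mp (hw_maps (mem_ball_self one_pos))),
    fun z hz => ?_⟩
  have hzw : z - h z = z * (1 - w z) := by
    linear_combination (by simpa [hh0] using sub_smul_dslope h 0 z : z * w z = h z)
  rw [hzw, norm_mul, mul_comm 2 ‖z‖, mul_assoc]
  gcongr
  exact norm_one_sub_apply_le hw hw_maps (right_ne_zero_of_mul hne) hz

theorem stmt_11 (f g h : ℂ → ℂ)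
    (hf : DifferentiableOn ℂ f (Metric.ball 0 1))
    (hg : DifferentiableOn ℂ g (Metric.ball 0 1))
    (hh : DifferentiableOn ℂ h (Metric.ball 0 1))
    (hfm : Set.MapsTo f (Metric.ball 0 1) (Metric.ball 0 1))
    (hgm : Set.MapsTo g (Metric.ball 0 1) (Metric.ball 0 1))
    (hhm : Set.MapsTo h (Metric.ball 0 1) (Metric.ball 0 1))
    (hf0 : f 0 = 0) (hg0 : g 0 = 0) (hh0 : h 0 = 0)
    (hsub : ∀ z ∈ Metric.ball (0 : ℂ) 1, g z = f (h z))
    (hne : deriv f 0 + deriv g 0 ≠ 0) :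
    0 ≤ ((deriv f 0 - deriv g 0) / (deriv f 0 + deriv g 0)).re ∧
    ∀ z ∈ Metric.ball (0 : ℂ) 1,
      ‖z - h z‖ ≤ 2 * ‖z‖ *
        (((deriv f 0 - deriv g 0) / (deriv f 0 + deriv g 0)).re *
            (1 + ‖z‖) / (1 - ‖z‖)
          + |((deriv f 0 - deriv g 0) / (deriv f 0 + deriv g 0)).im|) :=
  stmt_11_general f g h hf hh hhm hh0 hsub hne
end

section
/- Let f, g : 𝔻 → ℂ be univalent with f(0) = g(0) = 0, f'(0), g'(0) > 0, and suppose g(𝔻) ⊆ f(𝔻) with g = f ∘ h for a holomorphic h : 𝔻 → 𝔻 with h(0) = 0 and h'(0) > 0 (so g'(0) ≤ f'(0) ≤ 1 assuming f, g map into 𝔻). Then |f(z) − g(z)| ≤ (8|z|/(1−|z|)^4)·(1/g'(0) − 1/f'(0)) for all z ∈ 𝔻. -/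
/-!
Write `h z = z q(z)` (Schwarz), so `q` maps the disc into the closed disc with `q 0 = h'(0) = τ`.
Composing `q` with the disc automorphism `w ↦ (τ - w) / (1 - τ w)` and applying Schwarz again
gives `|1 - q z| ≤ (1 - τ)(1 + |z|)/(1 - |z|)`, hence a bound on `|z - h z|`. Since `f` maps the
disc into itself, the Cauchy estimate gives `|f'| ≤ 2/(1 - r)` on `|u| ≤ r`, so
`|f z - f (h z)| ≤ 2|z - h z|/(1 - |z|)`. Finally `g'(0) = f'(0) τ` and
`1 - τ ≤ 1/g'(0) - 1/f'(0)` because `f'(0) ≤ 1`.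
-/

open Metric Set

namespace Complex

lemma norm_ofReal_sub_le_norm_one_sub_mul {τ : ℝ} (hτ : |τ| ≤ 1) {w : ℂ}
    (hw : ‖w‖ ≤ 1) :
    ‖(τ : ℂ) - w‖ ≤ ‖1 - τ * w‖ := by
  have hw2 : w.re ^ 2 + w.im ^ 2 ≤ 1 := by
    rw [← sq_le_one_iff₀ (norm_nonneg w), Complex.sq_norm, normSq_apply] at hw
    nlinarith
  have hτ2 : τ ^ 2 ≤ 1 := by nlinarith [sq_abs τ, abs_nonneg τ]
  rw [← sq_le_sq₀ (norm_nonneg _) (norm_nonneg _), Complex.sq_norm, Complex.sq_norm,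
    normSq_apply, normSq_apply]
  simp only [sub_re, sub_im, mul_re, mul_im, ofReal_re, ofReal_im, one_re, one_im]
  -- `‖1 - τ w‖² - ‖τ - w‖² = (1 - τ²)(1 - ‖w‖²)`
  nlinarith [mul_nonneg (sub_nonneg.2 hτ2) (sub_nonneg.2 hw2)]

lemma norm_one_sub_le_of_mobius_eq {τ r : ℝ} (hτ : |τ| < 1) (hr : r < 1) {w u : ℂ}
    (hu : u * (1 - τ * w) = τ - w) (hur : ‖u‖ ≤ r) :
    ‖1 - w‖ ≤ (1 - τ) * (1 + r) / (1 - r) := by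
  have hτu : ‖(τ : ℂ) * u‖ ≤ r := by
    rw [norm_mul, norm_real, Real.norm_eq_abs]
    nlinarith [norm_nonneg u, abs_nonneg τ]
  have hden : 1 - r ≤ ‖1 - (τ : ℂ) * u‖ := by
    have := norm_sub_norm_le (1 : ℂ) (τ * u)
    rw [norm_one] at this
    linarith
  have hne : 1 - (τ : ℂ) * u ≠ 0 := norm_pos_iff.mp (by linarith)
  have hτ1 : ‖1 - (τ : ℂ)‖ = 1 - τ := by
    rw [← ofReal_one, ← ofReal_sub, norm_real, Real.norm_eq_abs,
      abs_of_pos (by linarith [le_abs_self τ])]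
  have hw : 1 - w = (1 - τ) * (1 + u) / (1 - τ * u) := by
    rw [eq_div_iff hne]
    linear_combination -hu
  have hτ0 : 0 ≤ 1 - τ := by linarith [le_abs_self τ]
  have hr0 : 0 ≤ 1 + r := by linarith [(norm_nonneg u).trans hur]
  rw [hw, norm_div, norm_mul, hτ1]
  gcongr
  exact (norm_add_le _ _).trans (by rw [norm_one]; linarith)

theorem norm_one_sub_le_of_mapsTo_closedBall {q : ℂ → ℂ} {τ : ℝ}
    (hq : DifferentiableOn ℂ q (ball 0 1)) (hmaps : MapsTo q (ball 0 1) (closedBall 0 1))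
    (hq0 : q 0 = τ) {z : ℂ} (hz : ‖z‖ < 1) :
    ‖1 - q z‖ ≤ (1 - τ) * (1 + ‖z‖) / (1 - ‖z‖) := by
  have h0 : (0 : ℂ) ∈ ball 0 1 := mem_ball_self one_pos
  have hτ : |τ| ≤ 1 := by simpa [hq0] using hmaps h0
  rcases hτ.eq_or_lt with hτ | hτ
  · have hconst : q z = τ := by
      have hmax : IsMaxOn (norm ∘ q) (ball 0 1) 0 := fun w hw => by
        simpa [hq0, hτ] using hmaps hw
      simpa [hq0] using eqOn_of_isPreconnected_of_isMaxOn_norm (convex_ball 0 1).isPreconnected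
        isOpen_ball hq h0 hmax (mem_ball_zero_iff.2 hz)
    have hτ1 : ‖1 - (τ : ℂ)‖ = 1 - τ := by
      rw [← ofReal_one, ← ofReal_sub, norm_real, Real.norm_eq_abs,
        abs_of_nonneg (by linarith [le_abs_self τ])]
    rw [hconst, hτ1, le_div_iff₀ (by linarith)]
    nlinarith [norm_nonneg z, le_abs_self τ]
  · have hden : ∀ w ∈ ball (0 : ℂ) 1, 1 - τ * q w ≠ 0 := fun w hw => by
      have : ‖(τ : ℂ) * q w‖ < 1 := by
        rw [norm_mul, norm_real, Real.norm_eq_abs]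
        nlinarith [mem_closedBall_zero_iff.1 (hmaps hw), norm_nonneg (q w), abs_nonneg τ]
      exact sub_ne_zero.2 fun h => by simp [← h] at this
    set u : ℂ → ℂ := fun w => (τ - q w) / (1 - τ * q w)
    have hu : DifferentiableOn ℂ u (ball 0 1) :=
      ((differentiableOn_const _).sub hq).div
        ((differentiableOn_const _).sub ((differentiableOn_const _).mul hq)) hden
    have humaps : MapsTo u (ball 0 1) (closedBall 0 1) := fun w hw => by
      simp only [u, mem_closedBall_zero_iff, norm_div]
      exact div_le_one_of_le₀ (norm_ofReal_sub_le_norm_one_sub_mul hτ.le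
        (mem_closedBall_zero_iff.1 (hmaps hw))) (norm_nonneg _)
    have hu0 : u 0 = 0 := by simp [u, hq0]
    refine norm_one_sub_le_of_mobius_eq hτ hz ?_ (norm_le_norm_of_mapsTo_ball hu humaps hu0 hz)
    exact div_mul_cancel₀ _ (hden z (mem_ball_zero_iff.2 hz))

theorem norm_deriv_le_two_div_of_mapsTo_closedBall {f : ℂ → ℂ}
    (hf : DifferentiableOn ℂ f (ball 0 1)) (hmaps : MapsTo f (ball 0 1) (closedBall 0 1))
    {u : ℂ} (hu : ‖u‖ < 1) : ‖deriv f u‖ ≤ 2 / (1 - ‖u‖) := by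
  have hball : ball u (1 - ‖u‖) ⊆ ball 0 1 :=
    ball_subset_ball' (by rw [dist_zero_right]; linarith)
  refine norm_deriv_le_div_of_mapsTo_ball (hf.mono hball) (fun w hw => ?_) (by linarith)
  have hfw := mem_closedBall_zero_iff.1 (hmaps (hball hw))
  have hfu := mem_closedBall_zero_iff.1 (hmaps (mem_ball_zero_iff.2 hu))
  rw [mem_closedBall, dist_eq_norm]
  linarith [norm_sub_le (f w) (f u)]

theorem norm_sub_le_of_mapsTo_closedBall {f : ℂ → ℂ}
    (hf : DifferentiableOn ℂ f (ball 0 1)) (hmaps : MapsTo f (ball 0 1) (closedBall 0 1))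
    {r : ℝ} (hr : r < 1) {x y : ℂ} (hx : ‖x‖ ≤ r) (hy : ‖y‖ ≤ r) :
    ‖f x - f y‖ ≤ 2 / (1 - r) * ‖x - y‖ := by
  have hsub : closedBall (0 : ℂ) r ⊆ ball 0 1 := closedBall_subset_ball hr
  refine (convex_closedBall 0 r).norm_image_sub_le_of_norm_deriv_le
    (fun w hw => hf.differentiableAt (isOpen_ball.mem_nhds (hsub hw))) (fun w hw => ?_)
    (mem_closedBall_zero_iff.2 hy) (mem_closedBall_zero_iff.2 hx)
  have hw := mem_closedBall_zero_iff.1 hw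
  refine (norm_deriv_le_two_div_of_mapsTo_closedBall hf hmaps (hw.trans_lt hr)).trans ?_
  gcongr

theorem norm_sub_self_le_of_mapsTo_closedBall {h : ℂ → ℂ} {τ : ℝ}
    (hh : DifferentiableOn ℂ h (ball 0 1)) (hmaps : MapsTo h (ball 0 1) (closedBall 0 1))
    (hh0 : h 0 = 0) (hτ : deriv h 0 = τ) {z : ℂ} (hz : ‖z‖ < 1) :
    ‖z - h z‖ ≤ ‖z‖ * ((1 - τ) * (1 + ‖z‖) / (1 - ‖z‖)) := by
  have h0 : ball (0 : ℂ) 1 ∈ nhds 0 := isOpen_ball.mem_nhds (mem_ball_self one_pos)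
  have hmaps' : MapsTo (dslope h 0) (ball 0 1) (closedBall 0 1) := fun w hw => by
    simpa using norm_dslope_le_div_of_mapsTo_ball hh (by rwa [hh0]) hw
  have hq := norm_one_sub_le_of_mapsTo_closedBall ((differentiableOn_dslope h0).2 hh) hmaps'
    (by rw [dslope_same, hτ]) hz
  have hzq : z - h z = z * (1 - dslope h 0 z) := by
    have := sub_smul_dslope h 0 z
    rw [sub_zero, hh0, sub_zero, smul_eq_mul] at this
    linear_combination this
  rw [hzq, norm_mul]
  gcongr

end Complex

lemma two_div_mul_le_eight_mul_div {r τ : ℝ} (hr0 : 0 ≤ r) (hr1 : r < 1) (hτ : τ ≤ 1) :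
    2 / (1 - r) * (r * ((1 - τ) * (1 + r) / (1 - r))) ≤ 8 * r / (1 - r) ^ 4 * (1 - τ) := by
  have h1r : 0 < 1 - r := by linarith
  calc 2 / (1 - r) * (r * ((1 - τ) * (1 + r) / (1 - r)))
      = r * (1 - τ) / (1 - r) ^ 4 * (2 * (1 + r) * (1 - r) ^ 2) := by field_simp
    _ ≤ r * (1 - τ) / (1 - r) ^ 4 * 8 := by
      have : 0 ≤ 1 - τ := by linarith
      gcongr
      nlinarith
    _ = 8 * r / (1 - r) ^ 4 * (1 - τ) := by ring

lemma one_sub_le_inv_mul_sub_inv {b τ : ℝ} (hb0 : 0 < b) (hb1 : b ≤ 1) (hτ0 : 0 < τ)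
    (hτ1 : τ ≤ 1) :
    1 - τ ≤ 1 / (b * τ) - 1 / b := by
  rw [div_sub_div _ _ (by positivity) hb0.ne', le_div_iff₀ (by positivity)]
  nlinarith [mul_nonneg (sub_nonneg.2 hτ1) (sub_nonneg.2 (mul_le_one₀ hb1 hτ0.le hτ1))]

theorem stmt_12_general (f g h : ℂ → ℂ)
    (hf : DifferentiableOn ℂ f (Metric.ball 0 1))
    (hh : DifferentiableOn ℂ h (Metric.ball 0 1))
    (hfm : Set.MapsTo f (Metric.ball 0 1) (Metric.ball 0 1))
    (hhm : Set.MapsTo h (Metric.ball 0 1) (Metric.ball 0 1))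
    (hf0 : f 0 = 0) (hh0 : h 0 = 0)
    (hf' : (deriv f 0).im = 0 ∧ 0 < (deriv f 0).re)
    (hh' : (deriv h 0).im = 0 ∧ 0 < (deriv h 0).re)
    (hsub : ∀ z ∈ Metric.ball (0 : ℂ) 1, g z = f (h z)) :
    ∀ z ∈ Metric.ball (0 : ℂ) 1,
      ‖f z - g z‖ ≤
        8 * ‖z‖ / (1 - ‖z‖) ^ 4 *
          (1 / (deriv g 0).re - 1 / (deriv f 0).re) := by
  intro z hz
  have hz1 : ‖z‖ < 1 := mem_ball_zero_iff.1 hz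
  have h0 : ball (0 : ℂ) 1 ∈ nhds 0 := isOpen_ball.mem_nhds (mem_ball_self one_pos)
  set τ := (deriv h 0).re
  have hτ : deriv h 0 = τ := Complex.ext rfl (by simp [hh'.1])
  have hchain : deriv g 0 = deriv f 0 * τ := by
    have hfd : DifferentiableAt ℂ f (h 0) := by rw [hh0]; exact hf.differentiableAt h0
    rw [(Filter.eventuallyEq_of_mem h0 hsub).deriv_eq, ← Function.comp_def,
      deriv_comp 0 hfd (hh.differentiableAt h0), hh0, hτ]
  have hfm' := hfm.mono_right ball_subset_closedBall
  have hhm' := hhm.mono_right ball_subset_closedBall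
  have hb1 : (deriv f 0).re ≤ 1 := (Complex.re_le_norm _).trans <|
    Complex.norm_deriv_le_one_of_mapsTo_ball hf (by rwa [hf0]) one_pos
  have hτ1 : τ ≤ 1 := (Complex.re_le_norm _).trans <|
    Complex.norm_deriv_le_one_of_mapsTo_ball hh (by rwa [hh0]) one_pos
  rw [hsub z hz, hchain, Complex.re_mul_ofReal]
  calc ‖f z - f (h z)‖ ≤ 2 / (1 - ‖z‖) * ‖z - h z‖ :=
        Complex.norm_sub_le_of_mapsTo_closedBall hf hfm' hz1 le_rfl
          (Complex.norm_le_norm_of_mapsTo_ball hh hhm' hh0 hz1)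
    _ ≤ 2 / (1 - ‖z‖) * (‖z‖ * ((1 - τ) * (1 + ‖z‖) / (1 - ‖z‖))) := by
        gcongr
        exact Complex.norm_sub_self_le_of_mapsTo_closedBall hh hhm' hh0 hτ hz1
    _ ≤ 8 * ‖z‖ / (1 - ‖z‖) ^ 4 * (1 - τ) :=
        two_div_mul_le_eight_mul_div (norm_nonneg z) hz1 hτ1
    _ ≤ 8 * ‖z‖ / (1 - ‖z‖) ^ 4 *
          (1 / ((deriv f 0).re * τ) - 1 / (deriv f 0).re) :=
        mul_le_mul_of_nonneg_left (one_sub_le_inv_mul_sub_inv hf'.2 hb1 hh'.2 hτ1)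
          (div_nonneg (by positivity) (pow_nonneg (by linarith) 4))

theorem stmt_12 (f g h : ℂ → ℂ)
    (hf : DifferentiableOn ℂ f (Metric.ball 0 1))
    (hg : DifferentiableOn ℂ g (Metric.ball 0 1))
    (hh : DifferentiableOn ℂ h (Metric.ball 0 1))
    (hfi : Set.InjOn f (Metric.ball 0 1)) (hgi : Set.InjOn g (Metric.ball 0 1))
    (hfm : Set.MapsTo f (Metric.ball 0 1) (Metric.ball 0 1))
    (hgm : Set.MapsTo g (Metric.ball 0 1) (Metric.ball 0 1))
    (hhm : Set.MapsTo h (Metric.ball 0 1) (Metric.ball 0 1))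
    (hf0 : f 0 = 0) (hg0 : g 0 = 0) (hh0 : h 0 = 0)
    (hrange : g '' (Metric.ball 0 1) ⊆ f '' (Metric.ball 0 1))
    (hf' : (deriv f 0).im = 0 ∧ 0 < (deriv f 0).re)
    (hg' : (deriv g 0).im = 0 ∧ 0 < (deriv g 0).re)
    (hh' : (deriv h 0).im = 0 ∧ 0 < (deriv h 0).re)
    (hsub : ∀ z ∈ Metric.ball (0 : ℂ) 1, g z = f (h z)) :
    ∀ z ∈ Metric.ball (0 : ℂ) 1,
      ‖f z - g z‖ ≤
        8 * ‖z‖ / (1 - ‖z‖) ^ 4 *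
          (1 / (deriv g 0).re - 1 / (deriv f 0).re) :=
  stmt_12_general f g h hf hh hfm hhm hf0 hh0 hf' hh' hsub
end

section
/- Let (λ_{s,t})_{0≤s≤t} be a family of probability measures on the unit circle 𝕋 such that λ_{s,s} = δ_1 for all s, the map (s,t) ↦ λ_{s,t} is weakly continuous, and with mean m(s,t) = ∫_𝕋 ξ dλ_{s,t}(ξ) satisfying the multiplicativity m(s,u) = m(s,t)·m(t,u) for 0 ≤ s ≤ t ≤ u. Then m(s,t) ≠ 0 for all 0 ≤ s ≤ t. -/
/-!
Write `m(s, t)` for the mean of `μ (s, t)`. Since the measures live on the unit circle, the mean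
is a weak limit of integrals of bounded continuous functions (clipped real and imaginary parts),
so `m` is continuous, and `m(s, s) = 1`. If `m(s, t) = 0`, let `t₁` be the first zero of
`x ↦ m(s, x)` after `s`; then `t₁ > s`, and `0 = m(s, t₁) = m(s, x) m(x, t₁)` with `m(s, x) ≠ 0`
gives `m(x, t₁) = 0` for all `x ∈ [s, t₁)`. Letting `x → t₁` yields `m(t₁, t₁) = 0`,
a contradiction.
-/

open MeasureTheory Filter Set BoundedContinuousFunction

noncomputable def ContinuousMap.clipUnit {α : Type*} [TopologicalSpace α] (φ : C(α, ℝ)) :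
    α →ᵇ ℝ :=
  mkOfBound ⟨fun x => projIcc (-1) 1 (by norm_num) (φ x), by fun_prop⟩ 2 fun _ _ =>
    (Real.dist_le_of_mem_Icc (Subtype.prop _) (Subtype.prop _)).trans_eq (by norm_num)

theorem ContinuousMap.clipUnit_apply_of_abs_le {α : Type*} [TopologicalSpace α]
    (φ : C(α, ℝ)) {x : α} (hx : |φ x| ≤ 1) : φ.clipUnit x = φ x := by
  change (projIcc (-1 : ℝ) 1 (by norm_num) (φ x) : ℝ) = φ x
  rw [projIcc_of_mem _ (abs_le.1 hx)]

theorem integral_clipUnit_eq {α : Type*} [TopologicalSpace α] [MeasurableSpace α]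
    {μ : Measure α} (φ : C(α, ℝ)) (hφ : ∀ᵐ x ∂μ, |φ x| ≤ 1) :
    ∫ x, φ.clipUnit x ∂μ = ∫ x, φ x ∂μ :=
  integral_congr_ae (hφ.mono fun _ => φ.clipUnit_apply_of_abs_le)

theorem continuousOn_integral_id_of_ae_norm_le_one {X : Type*} [TopologicalSpace X]
    {μ : X → Measure ℂ} [∀ p, IsFiniteMeasure (μ p)] {S : Set X}
    (hdisc : ∀ p ∈ S, ∀ᵐ ξ ∂(μ p), ‖ξ‖ ≤ 1)
    (hcont : ∀ f : ℂ →ᵇ ℝ, ContinuousOn (fun p => ∫ ξ, f ξ ∂(μ p)) S) :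
    ContinuousOn (fun p => ∫ ξ, ξ ∂(μ p)) S := by
  let re : C(ℂ, ℝ) := ⟨Complex.re, Complex.continuous_re⟩
  let im : C(ℂ, ℝ) := ⟨Complex.im, Complex.continuous_im⟩
  -- On the unit disc, `re` and `im` agree with their clipped, bounded versions.
  refine ContinuousOn.congr (f := fun p => ((∫ ξ, re.clipUnit ξ ∂(μ p) : ℝ) : ℂ) +
      ((∫ ξ, im.clipUnit ξ ∂(μ p) : ℝ) : ℂ) * Complex.I) (by fun_prop) fun p hp => ?_
  have hint : Integrable (fun ξ : ℂ => ξ) (μ p) :=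
    ⟨aestronglyMeasurable_id, .of_bounded (hdisc p hp)⟩
  dsimp only
  rw [integral_clipUnit_eq re ((hdisc p hp).mono fun ξ h => (Complex.abs_re_le_norm ξ).trans h),
    integral_clipUnit_eq im ((hdisc p hp).mono fun ξ h => (Complex.abs_im_le_norm ξ).trans h)]
  exact (integral_re_add_im hint).symm

theorem ne_zero_of_continuousOn_of_map_mul {M : Type*} [MonoidWithZero M] [NoZeroDivisors M]
    [Nontrivial M] [TopologicalSpace M] [T1Space M] {m : ℝ × ℝ → M}
    (hcont : ContinuousOn m {p | 0 ≤ p.1 ∧ p.1 ≤ p.2})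
    (hone : ∀ s, 0 ≤ s → m (s, s) = 1)
    (hmul : ∀ s t u, 0 ≤ s → s ≤ t → t ≤ u → m (s, u) = m (s, t) * m (t, u))
    {s t : ℝ} (hs : 0 ≤ s) (hst : s ≤ t) : m (s, t) ≠ 0 := by
  intro h0
  set Z := Icc s t ∩ (fun x => m (s, x)) ⁻¹' {0}
  have hZ : IsClosed Z :=
    (hcont.comp (by fun_prop) fun x hx => ⟨hs, hx.1⟩).preimage_isClosed_of_isClosed
      isClosed_Icc isClosed_singleton
  have hbdd : BddBelow Z := ⟨s, fun x hx => hx.1.1⟩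
  obtain ⟨⟨hst₁, ht₁t⟩, ht₁⟩ : sInf Z ∈ Z := hZ.csInf_mem ⟨t, ⟨hst, le_rfl⟩, h0⟩ hbdd
  set t₁ := sInf Z
  have hs_lt : s < t₁ := hst₁.lt_of_ne fun h => by simp [← h, hone s hs] at ht₁
  have hleft : ∀ x ∈ Ico s t₁, m (x, t₁) = 0 := fun x hx =>
    (mul_eq_zero.1 ((hmul s x t₁ hs hx.1 hx.2.le).symm.trans ht₁)).resolve_left fun h =>
      hx.2.not_ge (csInf_le hbdd ⟨⟨hx.1, hx.2.le.trans ht₁t⟩, h⟩)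
  have hclosed : IsClosed (Icc s t₁ ∩ (fun x => m (x, t₁)) ⁻¹' {0}) :=
    (hcont.comp (by fun_prop) fun x hx => ⟨hs.trans hx.1, hx.2⟩).preimage_isClosed_of_isClosed
      isClosed_Icc isClosed_singleton
  have ht₁_zero : m (t₁, t₁) = 0 :=
    (hclosed.closure_subset_iff.2 (fun x hx => ⟨Ico_subset_Icc_self hx, hleft x hx⟩)
      (closure_Ico hs_lt.ne ▸ right_mem_Icc.2 hs_lt.le)).2
  exact one_ne_zero ((hone t₁ (hs.trans hst₁)).symm.trans ht₁_zero)

theorem stmt_15 (μ : ℝ × ℝ → Measure ℂ)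
    [∀ p, IsProbabilityMeasure (μ p)]
    (hcirc : ∀ p : ℝ × ℝ, 0 ≤ p.1 → p.1 ≤ p.2 → μ p (Metric.sphere (0 : ℂ) 1)ᶜ = 0)
    (hδ : ∀ s : ℝ, 0 ≤ s → μ (s, s) = Measure.dirac 1)
    (hcont : ∀ f : BoundedContinuousFunction ℂ ℝ,
      ContinuousOn (fun p : ℝ × ℝ => ∫ ξ, f ξ ∂(μ p)) {p : ℝ × ℝ | 0 ≤ p.1 ∧ p.1 ≤ p.2})
    (hmul : ∀ s t u : ℝ, 0 ≤ s → s ≤ t → t ≤ u →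
      (∫ ξ, ξ ∂(μ (s, u))) = (∫ ξ, ξ ∂(μ (s, t))) * (∫ ξ, ξ ∂(μ (t, u)))) :
    ∀ s t : ℝ, 0 ≤ s → s ≤ t → (∫ ξ, ξ ∂(μ (s, t))) ≠ 0 := by
  have hdisc : ∀ p ∈ {p : ℝ × ℝ | 0 ≤ p.1 ∧ p.1 ≤ p.2}, ∀ᵐ ξ ∂(μ p), ‖ξ‖ ≤ 1 := fun p hp =>
    Eventually.mono (mem_ae_iff.2 (hcirc p hp.1 hp.2)) fun _ hξ =>
      (mem_sphere_zero_iff_norm.1 hξ).le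
  have hone : ∀ s, 0 ≤ s → ∫ ξ, ξ ∂(μ (s, s)) = 1 := fun s hs => by
    rw [hδ s hs, integral_dirac]
  exact fun s t hs hst => ne_zero_of_continuousOn_of_map_mul
    (continuousOn_integral_id_of_ae_norm_le_one hdisc hcont) hone hmul hs hst
end

section
/- Let Q : 𝔻 × B_b([0,∞)) → ℂ be such that for each bounded Borel set B, z ↦ Q(z, B) is holomorphic on 𝔻 with Re Q(z, B) ≥ 0, for each z ∈ 𝔻, Q(z, ·) is a locally finite complex measure, and Q(z, {t}) = 0 for all t. Then the assignment Φ(B) := Im Q(0, B) defines a locally finite signed measure on [0, ∞), and for each B, the measure Π₀(·, B) in the Herglotz representation Q(z, B) = iΦ(B) + ∫_𝕋 (1+ξz)/(1−ξz) Π₀(dξ, B) satisfies: for pairwise disjoint Borel sets B_1, B_2, ... ⊆ [0,T], Π₀(A, ∪_n B_n) = Σ_n Π₀(A, B_n) for every Borel A ⊆ 𝕋 (i.e., Π₀ is σ-additive in its second argument). -/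
/-!
The imaginary parts are σ-additive because `Q 0` is. For the measures, subtracting `i Φ` from the
σ-additivity of `Q z` shows that the Herglotz integrals of `Π₀(·, Bₙ)` sum to that of
`Π₀(·, ⋃ Bₙ)` at every `z ∈ 𝔻`; integrating termwise, this sum is the Herglotz integral of
`Σₙ Π₀(·, Bₙ)`, which is finite because its masses `Π₀(𝕋, Bₙ) = Re Q(0, Bₙ)` are summable.
It remains to see that a finite measure on the unit circle is determined by its Herglotz
integral. Since `(1 + ξz)/(1 - ξz) = 2/(1 - ξz) - 1`, expanding the geometric series shows that
the Herglotz integral determines all moments `∫ ξⁿ`. On the circle `conj ξ = ξ⁻¹`, so the moments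
determine the integrals of all polynomials in `ξ` and `conj ξ`; these form a point-separating
star subalgebra of the bounded continuous functions on the circle, and such integrals determine a
finite measure.
-/

open MeasureTheory Bornology Metric Complex Set ComplexConjugate BoundedContinuousFunction

lemma isFiniteMeasure_sum_of_hasSum {α ι : Type*} [MeasurableSpace α] {μ : ι → Measure α}
    [∀ i, IsFiniteMeasure (μ i)] {a : ℝ}
    (h : HasSum (fun i => (μ i).real univ) a) : IsFiniteMeasure (Measure.sum μ) := by
  constructor
  rw [Measure.sum_apply _ MeasurableSet.univ]
  simp_rw [← ofReal_measureReal (measure_ne_top _ _),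
    ← ENNReal.ofReal_tsum_of_nonneg (fun _ => measureReal_nonneg) h.summable]
  exact ENNReal.ofReal_lt_top

section UnitCircle

variable {μ ν : Measure ℂ}

lemma ae_norm_eq_one_of_measure_compl_sphere (hμ : μ (sphere (0 : ℂ) 1)ᶜ = 0) :
    ∀ᵐ ξ ∂μ, ‖ξ‖ = 1 := by
  filter_upwards [mem_ae_iff.2 hμ] with ξ hξ
  simpa using hξ

lemma pow_mul_conj_pow_of_norm_eq_one {ξ : ℂ} (hξ : ‖ξ‖ = 1) {m n : ℕ} (hnm : n ≤ m) :
    ξ ^ m * conj ξ ^ n = ξ ^ (m - n) := by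
  have hunit : ξ * conj ξ = 1 := by
    rw [mul_conj, normSq_eq_norm_sq, hξ]; norm_num
  rw [← Nat.sub_add_cancel hnm, pow_add, mul_assoc, ← mul_pow, hunit, one_pow, mul_one,
    Nat.add_sub_cancel]

lemma integral_pow_mul_conj_pow_eq (hμ : μ (sphere (0 : ℂ) 1)ᶜ = 0)
    (hν : ν (sphere (0 : ℂ) 1)ᶜ = 0) (h : ∀ n : ℕ, ∫ ξ, ξ ^ n ∂μ = ∫ ξ, ξ ^ n ∂ν) (m n : ℕ) :
    ∫ ξ, ξ ^ m * conj ξ ^ n ∂μ = ∫ ξ, ξ ^ m * conj ξ ^ n ∂ν := by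
  wlog hnm : n ≤ m generalizing m n
  · -- conjugating the integrand swaps `m` and `n`
    simpa only [← integral_conj, map_mul, map_pow, conj_conj, mul_comm]
      using congrArg conj (this n m (by omega))
  have hreduce : ∀ P : Measure ℂ, P (sphere (0 : ℂ) 1)ᶜ = 0 →
      ∫ ξ, ξ ^ m * conj ξ ^ n ∂P = ∫ ξ, ξ ^ (m - n) ∂P := fun P hP =>
    integral_congr_ae <| (ae_norm_eq_one_of_measure_compl_sphere hP).mono fun ξ hξ =>
      pow_mul_conj_pow_of_norm_eq_one hξ hnm
  rw [hreduce μ hμ, hreduce ν hν, h]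

theorem ext_of_integral_pow_eq [IsFiniteMeasure μ] [IsFiniteMeasure ν]
    (hμ : μ (sphere (0 : ℂ) 1)ᶜ = 0) (hν : ν (sphere (0 : ℂ) 1)ᶜ = 0)
    (h : ∀ n : ℕ, ∫ ξ, ξ ^ n ∂μ = ∫ ξ, ξ ^ n ∂ν) : μ = ν := by
  set S := sphere (0 : ℂ) 1
  have hS : MeasurableSet S := isClosed_sphere.measurableSet
  have hmap : ∀ P : Measure ℂ, P Sᶜ = 0 → (P.comap ((↑) : S → ℂ)).map (↑) = P := fun P hP => by
    rw [(MeasurableEmbedding.subtype_coe hS).map_comap, Subtype.range_coe,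
      Measure.restrict_eq_self_of_ae_mem (s := S) (mem_ae_iff.2 hP)]
  have hintegral : ∀ P : Measure ℂ, P Sᶜ = 0 → ∀ f : ℂ → ℂ,
      ∫ x : S, f x ∂(P.comap (↑)) = ∫ ξ, f ξ ∂P := fun P hP f => by
    rw [integral_subtype_comap hS, Measure.restrict_eq_self_of_ae_mem (s := S) (mem_ae_iff.2 hP)]
  rw [← hmap μ hμ, ← hmap ν hν]
  congr 1
  let z : S →ᵇ ℂ := .mkOfCompact ⟨(↑), continuous_subtype_val⟩
  refine ext_of_forall_mem_subalgebra_integral_eq_of_polish (A := StarAlgebra.adjoin ℂ {z})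
    (fun x y hxy => ⟨_, ⟨_, ⟨z, StarAlgebra.self_mem_adjoin_singleton ℂ z, rfl⟩, rfl⟩,
      fun h => hxy (Subtype.ext h)⟩) fun g hg => ?_
  have hspan : g ∈ Submodule.span ℂ (Submonoid.closure {z, star z}) := by
    rw [← Set.singleton_union, ← Set.star_singleton, ← StarAlgebra.adjoin_eq_span]
    exact hg
  clear hg
  induction hspan using Submodule.span_induction with
  | mem g hg =>
    obtain ⟨m, n, rfl⟩ := (Submonoid.mem_closure_pair _ _ _).1 hg
    simpa [z] using (hintegral μ hμ fun ξ => ξ ^ m * conj ξ ^ n).trans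
      ((integral_pow_mul_conj_pow_eq hμ hν h m n).trans (hintegral ν hν _).symm)
  | zero => simp
  | add f g _ _ hf hg =>
    simp only [BoundedContinuousFunction.coe_add, Pi.add_apply]
    rw [integral_add (f.integrable _) (g.integrable _), integral_add (f.integrable _)
      (g.integrable _), hf, hg]
  | smul c f _ hf =>
    simp only [BoundedContinuousFunction.coe_smul, integral_smul, hf]

end UnitCircle

section Herglotz

variable {μ ν : Measure ℂ} {z : ℂ}

lemma norm_inv_one_sub_mul_le {ξ : ℂ} (hξ : ‖ξ‖ = 1) (hz : ‖z‖ < 1) :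
    ‖(1 - ξ * z)⁻¹‖ ≤ (1 - ‖z‖)⁻¹ := by
  have hle : 1 - ‖z‖ ≤ ‖1 - ξ * z‖ := by
    simpa [norm_mul, hξ] using norm_sub_norm_le (1 : ℂ) (ξ * z)
  rw [norm_inv]
  exact inv_anti₀ (by linarith) hle

lemma integrable_inv_one_sub_mul [IsFiniteMeasure μ] (hμ : μ (sphere (0 : ℂ) 1)ᶜ = 0)
    (hz : ‖z‖ < 1) : Integrable (fun ξ => (1 - ξ * z)⁻¹) μ :=
  .of_bound (by fun_prop) _ <| (ae_norm_eq_one_of_measure_compl_sphere hμ).mono fun _ hξ =>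
    norm_inv_one_sub_mul_le hξ hz

lemma norm_integral_pow_le [IsFiniteMeasure μ] (hμ : μ (sphere (0 : ℂ) 1)ᶜ = 0) (n : ℕ) :
    ‖∫ ξ, ξ ^ n ∂μ‖ ≤ μ.real univ := by
  simpa using norm_integral_le_of_norm_le_const (C := 1)
    ((ae_norm_eq_one_of_measure_compl_sphere hμ).mono fun ξ hξ => by simp [hξ])

lemma hasSum_integral_pow_mul_pow [IsFiniteMeasure μ] (hμ : μ (sphere (0 : ℂ) 1)ᶜ = 0)
    (hz : ‖z‖ < 1) : HasSum (fun n => (∫ ξ, ξ ^ n ∂μ) * z ^ n) (∫ ξ, (1 - ξ * z)⁻¹ ∂μ) := by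
  have hnorm : ∀ n, ∀ᵐ ξ ∂μ, ‖(ξ * z) ^ n‖ = ‖z‖ ^ n := fun n =>
    (ae_norm_eq_one_of_measure_compl_sphere hμ).mono fun ξ hξ => by simp [hξ]
  have hint : ∀ n, Integrable (fun ξ => (ξ * z) ^ n) μ := fun n =>
    .of_bound (by fun_prop) _ <| (hnorm n).mono fun _ h => h.le
  have hsummable : Summable fun n => ∫ ξ, ‖(ξ * z) ^ n‖ ∂μ := by
    simp_rw [integral_congr_ae (hnorm _), integral_const, smul_eq_mul]
    exact (summable_geometric_of_lt_one (norm_nonneg z) hz).mul_left _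
  have hcoeff : (fun n => ∫ ξ, (ξ * z) ^ n ∂μ) = fun n => (∫ ξ, ξ ^ n ∂μ) * z ^ n := by
    funext n
    simp_rw [mul_pow, integral_mul_const]
  have hsum : ∫ ξ, ∑' n, (ξ * z) ^ n ∂μ = ∫ ξ, (1 - ξ * z)⁻¹ ∂μ :=
    integral_congr_ae <| (ae_norm_eq_one_of_measure_compl_sphere hμ).mono fun ξ hξ =>
      tsum_geometric_of_norm_lt_one (by simpa [hξ] using hz)
  rw [← hcoeff, ← hsum]
  exact hasSum_integral_of_summable_integral_norm hint hsummable

lemma hasFPowerSeriesOnBall_integral_inv_one_sub_mul [IsFiniteMeasure μ]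
    (hμ : μ (sphere (0 : ℂ) 1)ᶜ = 0) :
    HasFPowerSeriesOnBall (fun z => ∫ ξ, (1 - ξ * z)⁻¹ ∂μ)
      (FormalMultilinearSeries.ofScalars ℂ fun n => ∫ ξ, ξ ^ n ∂μ) 0 1 where
  r_le := by
    have := (FormalMultilinearSeries.ofScalars ℂ fun n => ∫ ξ, ξ ^ n ∂μ).le_radius_of_bound
      (C := μ.real univ) (r := 1) fun n => by
        rw [FormalMultilinearSeries.ofScalars_norm]
        simpa using norm_integral_pow_le hμ n
    simpa using this
  r_pos := one_pos
  hasSum {y} hy := by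
    simp only [FormalMultilinearSeries.ofScalars_apply_eq, smul_eq_mul, zero_add]
    exact hasSum_integral_pow_mul_pow hμ
      (by simpa [← ENNReal.coe_one, ← NNReal.coe_lt_coe] using hy)

theorem ext_of_integral_inv_one_sub_mul_eq [IsFiniteMeasure μ] [IsFiniteMeasure ν]
    (hμ : μ (sphere (0 : ℂ) 1)ᶜ = 0) (hν : ν (sphere (0 : ℂ) 1)ᶜ = 0)
    (h : ∀ z ∈ ball (0 : ℂ) 1, ∫ ξ, (1 - ξ * z)⁻¹ ∂μ = ∫ ξ, (1 - ξ * z)⁻¹ ∂ν) : μ = ν := by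
  have hseries := (hasFPowerSeriesOnBall_integral_inv_one_sub_mul hμ).hasFPowerSeriesAt
    |>.eq_formalMultilinearSeries_of_eventually
      (hasFPowerSeriesOnBall_integral_inv_one_sub_mul hν).hasFPowerSeriesAt
      (Filter.eventually_of_mem (ball_mem_nhds 0 one_pos) h)
  exact ext_of_integral_pow_eq hμ hν
    (congrFun (FormalMultilinearSeries.ofScalars_series_injective ℂ ℂ hseries))

noncomputable def herglotzIntegral (μ : Measure ℂ) (z : ℂ) : ℂ := ∫ ξ, (1 + ξ * z) / (1 - ξ * z) ∂μ

lemma herglotzIntegral_zero [IsFiniteMeasure μ] : herglotzIntegral μ 0 = μ.real univ := by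
  simp [herglotzIntegral]

lemma one_add_mul_div_one_sub_mul_ae_eq (hμ : μ (sphere (0 : ℂ) 1)ᶜ = 0) (hz : ‖z‖ < 1) :
    (fun ξ => (1 + ξ * z) / (1 - ξ * z)) =ᵐ[μ] fun ξ => 2 * (1 - ξ * z)⁻¹ - 1 := by
  filter_upwards [ae_norm_eq_one_of_measure_compl_sphere hμ] with ξ hξ
  have hlt : ‖ξ * z‖ < 1 := by rwa [norm_mul, hξ, one_mul]
  have hne : 1 - ξ * z ≠ 0 := sub_ne_zero.2 fun h1 => by
    rw [← h1, norm_one] at hlt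
    exact lt_irrefl _ hlt
  field_simp
  ring

lemma integrable_one_add_mul_div_one_sub_mul [IsFiniteMeasure μ] (hμ : μ (sphere (0 : ℂ) 1)ᶜ = 0)
    (hz : ‖z‖ < 1) : Integrable (fun ξ => (1 + ξ * z) / (1 - ξ * z)) μ :=
  (((integrable_inv_one_sub_mul hμ hz).const_mul 2).sub (integrable_const 1)).congr
    (one_add_mul_div_one_sub_mul_ae_eq hμ hz).symm

lemma herglotzIntegral_eq [IsFiniteMeasure μ] (hμ : μ (sphere (0 : ℂ) 1)ᶜ = 0) (hz : ‖z‖ < 1) :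
    herglotzIntegral μ z = 2 * ∫ ξ, (1 - ξ * z)⁻¹ ∂μ - μ.real univ := by
  rw [herglotzIntegral, integral_congr_ae (one_add_mul_div_one_sub_mul_ae_eq hμ hz),
    integral_sub ((integrable_inv_one_sub_mul hμ hz).const_mul 2) (integrable_const 1),
    integral_const_mul]
  simp

theorem ext_of_herglotzIntegral_eq [IsFiniteMeasure μ] [IsFiniteMeasure ν]
    (hμ : μ (sphere (0 : ℂ) 1)ᶜ = 0) (hν : ν (sphere (0 : ℂ) 1)ᶜ = 0)
    (h : ∀ z ∈ ball (0 : ℂ) 1, herglotzIntegral μ z = herglotzIntegral ν z) : μ = ν := by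
  have hmass : μ.real univ = ν.real univ := by
    have := h 0 (mem_ball_self one_pos)
    rwa [herglotzIntegral_zero, herglotzIntegral_zero, ofReal_inj] at this
  refine ext_of_integral_inv_one_sub_mul_eq hμ hν fun z hz => ?_
  have hz' : ‖z‖ < 1 := mem_ball_zero_iff.1 hz
  have := h z hz
  rw [herglotzIntegral_eq hμ hz', herglotzIntegral_eq hν hz', hmass] at this
  linear_combination this / 2

theorem eq_sum_of_hasSum_herglotzIntegral {ι : Type*} [Countable ι] {μ : ι → Measure ℂ}
    [∀ i, IsFiniteMeasure (μ i)] [IsFiniteMeasure ν] (hμ : ∀ i, μ i (sphere (0 : ℂ) 1)ᶜ = 0)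
    (hν : ν (sphere (0 : ℂ) 1)ᶜ = 0)
    (h : ∀ z ∈ ball (0 : ℂ) 1, HasSum (fun i => herglotzIntegral (μ i) z) (herglotzIntegral ν z)) :
    ν = Measure.sum μ := by
  have hmass : HasSum (fun i => (μ i).real univ) (ν.real univ) := by
    simpa only [herglotzIntegral_zero, hasSum_ofReal] using h 0 (mem_ball_self one_pos)
  have := isFiniteMeasure_sum_of_hasSum hmass
  have hsupp : Measure.sum μ (sphere (0 : ℂ) 1)ᶜ = 0 := by
    simp [Measure.sum_apply _ isClosed_sphere.measurableSet.compl, hμ]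
  refine ext_of_herglotzIntegral_eq hν hsupp fun z hz => ?_
  calc herglotzIntegral ν z = ∑' i, herglotzIntegral (μ i) z := (h z hz).tsum_eq.symm
    _ = herglotzIntegral (Measure.sum μ) z :=
      (integral_sum_measure
        (integrable_one_add_mul_div_one_sub_mul hsupp (mem_ball_zero_iff.1 hz))).symm

theorem stmt_18_general (Q : ℂ → Set ℝ → ℂ) (Pi0 : Set ℝ → Measure ℂ)
    (hσadd : ∀ z ∈ Metric.ball (0 : ℂ) 1, ∀ B : ℕ → Set ℝ,
      (∀ n, MeasurableSet (B n)) → Pairwise (Function.onFun Disjoint B) →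
      IsBounded (⋃ n, B n) → HasSum (fun n => Q z (B n)) (Q z (⋃ n, B n)))
    (hfin : ∀ B : Set ℝ, MeasurableSet B → IsBounded B → IsFiniteMeasure (Pi0 B))
    (hsupp : ∀ B : Set ℝ, (Pi0 B) (Metric.sphere (0 : ℂ) 1)ᶜ = 0)
    (hrep : ∀ B : Set ℝ, MeasurableSet B → IsBounded B →
      ∀ z ∈ Metric.ball (0 : ℂ) 1,
        Q z B = Complex.I * ((Q 0 B).im : ℂ) + ∫ ξ, (1 + ξ * z) / (1 - ξ * z) ∂(Pi0 B))
    (T : ℝ) (B : ℕ → Set ℝ) (hB : ∀ n, MeasurableSet (B n))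
    (hBT : ∀ n, B n ⊆ Set.Icc 0 T) (hdisj : Pairwise (Function.onFun Disjoint B)) :
    HasSum (fun n => (Q 0 (B n)).im) ((Q 0 (⋃ n, B n)).im) ∧
    ∀ A : Set ℂ, MeasurableSet A → Pi0 (⋃ n, B n) A = ∑' n, Pi0 (B n) A := by
  have hBb : ∀ n, IsBounded (B n) := fun n => (isBounded_Icc 0 T).subset (hBT n)
  have hUm : MeasurableSet (⋃ n, B n) := .iUnion hB
  have hUb : IsBounded (⋃ n, B n) := (isBounded_Icc 0 T).subset (iUnion_subset hBT)
  have hQ : ∀ z ∈ ball (0 : ℂ) 1, HasSum (fun n => Q z (B n)) (Q z (⋃ n, B n)) :=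
    fun z hz => hσadd z hz B hB hdisj hUb
  have hΦ : HasSum (fun n => (Q 0 (B n)).im) (Q 0 (⋃ n, B n)).im :=
    imCLM.hasSum (hQ 0 (mem_ball_self one_pos))
  refine ⟨hΦ, fun A hA => ?_⟩
  have := hfin _ hUm hUb
  have := fun n => hfin _ (hB n) (hBb n)
  have hherglotz : ∀ C, MeasurableSet C → IsBounded C → ∀ z ∈ ball (0 : ℂ) 1,
      herglotzIntegral (Pi0 C) z = Q z C - I * (Q 0 C).im := fun C hC hCb z hz =>
    eq_sub_of_add_eq' (hrep C hC hCb z hz).symm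
  have hsum : Pi0 (⋃ n, B n) = Measure.sum fun n => Pi0 (B n) := by
    refine eq_sum_of_hasSum_herglotzIntegral (fun n => hsupp _) (hsupp _) fun z hz => ?_
    simp only [hherglotz _ (hB _) (hBb _) z hz, hherglotz _ hUm hUb z hz]
    exact (hQ z hz).sub ((ofRealCLM.hasSum hΦ).mul_left I)
  rw [hsum, Measure.sum_apply _ hA]

theorem stmt_18 (Q : ℂ → Set ℝ → ℂ) (Pi0 : Set ℝ → Measure ℂ)
    (hol : ∀ B : Set ℝ, MeasurableSet B → IsBounded B →
      DifferentiableOn ℂ (fun z => Q z B) (Metric.ball 0 1))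
    (hre : ∀ B : Set ℝ, MeasurableSet B → IsBounded B →
      ∀ z ∈ Metric.ball (0 : ℂ) 1, 0 ≤ (Q z B).re)
    (hσadd : ∀ z ∈ Metric.ball (0 : ℂ) 1, ∀ B : ℕ → Set ℝ,
      (∀ n, MeasurableSet (B n)) → Pairwise (Function.onFun Disjoint B) →
      IsBounded (⋃ n, B n) → HasSum (fun n => Q z (B n)) (Q z (⋃ n, B n)))
    (hnoatom : ∀ z ∈ Metric.ball (0 : ℂ) 1, ∀ t : ℝ, Q z {t} = 0)
    (hfin : ∀ B : Set ℝ, MeasurableSet B → IsBounded B → IsFiniteMeasure (Pi0 B))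
    (hsupp : ∀ B : Set ℝ, (Pi0 B) (Metric.sphere (0 : ℂ) 1)ᶜ = 0)
    (hrep : ∀ B : Set ℝ, MeasurableSet B → IsBounded B →
      ∀ z ∈ Metric.ball (0 : ℂ) 1,
        Q z B = Complex.I * ((Q 0 B).im : ℂ) + ∫ ξ, (1 + ξ * z) / (1 - ξ * z) ∂(Pi0 B))
    (T : ℝ) (B : ℕ → Set ℝ) (hB : ∀ n, MeasurableSet (B n))
    (hBT : ∀ n, B n ⊆ Set.Icc 0 T) (hdisj : Pairwise (Function.onFun Disjoint B)) :
    HasSum (fun n => (Q 0 (B n)).im) ((Q 0 (⋃ n, B n)).im) ∧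
    ∀ A : Set ℂ, MeasurableSet A → Pi0 (⋃ n, B n) A = ∑' n, Pi0 (B n) A :=
  stmt_18_general Q Pi0 hσadd hfin hsupp hrep T B hB hBT hdisj
end Herglotz
end
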